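/- The map μ ↦ μ̃ maps the set of laminates with compact support in M^{2×2}_+ bijectively onto itself: if μ is a compactly supported Borel probability measure on M^{2×2}_+ satisfying f(μ̄) ≤ ∫ f dμ for every function f rank-one convex on M^{2×2}_+, then μ̃ satisfies the same Jensen inequality for every function rank-one convex on M^{2×2}_+, and the map is an involution on this set. -/

import Mathlib

open MeasureTheory

noncomputable section

instance matrixMeasurableSpace {m n : ℕ} : MeasurableSpace (Matrix (Fin m) (Fin n) ℝ) :=
  show MeasurableSpace (Fin m → Fin n → ℝ) from inferInstance

/-- The Jacobian matrix of `φ : ℝⁿ → ℝᵐ` at `x`. -/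
def jacobianM (m n : ℕ) (φ : (Fin n → ℝ) → (Fin m → ℝ)) (x : Fin n → ℝ) :
    Matrix (Fin m) (Fin n) ℝ :=
  Matrix.of fun i j => fderiv ℝ φ x (Pi.single j 1) i

/-- `f : ℝ^{m×n} → ℝ` is quasiconvex: `f` is Borel measurable, locally bounded, and for every
nonempty bounded open `Ω ⊆ ℝⁿ`, every `X₀` and every smooth `φ` compactly supported in `Ω`,
`f X₀ * |Ω| ≤ ∫_Ω f (X₀ + Dφ x) dx`. -/
def IsQuasiconvex {m n : ℕ} (f : Matrix (Fin m) (Fin n) ℝ → ℝ) : Prop :=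
  Measurable f ∧
  (∀ K : Set (Matrix (Fin m) (Fin n) ℝ), IsCompact K → ∃ C : ℝ, ∀ X ∈ K, |f X| ≤ C) ∧
  ∀ Ω : Set (Fin n → ℝ), IsOpen Ω → Ω.Nonempty → Bornology.IsBounded Ω →
    ∀ (X₀ : Matrix (Fin m) (Fin n) ℝ) (φ : (Fin n → ℝ) → (Fin m → ℝ)),
      ContDiff ℝ (⊤ : ℕ∞) φ → HasCompactSupport φ → tsupport φ ⊆ Ω →
      f X₀ * (volume Ω).toReal ≤ ∫ x in Ω, f (X₀ + jacobianM m n φ x)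

/-- `f : ℝ^{m×n} → ℝ` is rank-one convex. -/
def IsRankOneConvex {m n : ℕ} (f : Matrix (Fin m) (Fin n) ℝ → ℝ) : Prop :=
  ∀ X Y : Matrix (Fin m) (Fin n) ℝ, (X - Y).rank ≤ 1 →
    ∀ t : ℝ, t ∈ Set.Icc (0 : ℝ) 1 →
      f (t • X + (1 - t) • Y) ≤ t * f X + (1 - t) * f Y

/-- The barycentre `μ̄ = ∫ X dμ(X)`, computed entrywise. -/
def matBarycenter {m n : ℕ} (μ : Measure (Matrix (Fin m) (Fin n) ℝ)) :
    Matrix (Fin m) (Fin n) ℝ :=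
  Matrix.of fun i j => ∫ X, X i j ∂μ

/-- `M^{2×n}_tri`: second row is `(0, …, 0, a)`. -/
def Mtri (n : ℕ) : Set (Matrix (Fin 2) (Fin n) ℝ) :=
  {X | ∀ j : Fin n, (j : ℕ) + 1 < n → X 1 j = 0}

/-- `M^{2×n}_diag`: first row `(a₁, …, a_{n-1}, 0)`, second row `(0, …, 0, b)`. -/
def Mdiag (n : ℕ) : Set (Matrix (Fin 2) (Fin n) ℝ) :=
  {X | (∀ j : Fin n, (j : ℕ) + 1 < n → X 1 j = 0) ∧
       (∀ j : Fin n, (j : ℕ) + 1 = n → X 0 j = 0)}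

/-- The orthogonal projection of `ℝ^{2×n}` onto `M^{2×n}_diag`. -/
def Pdiag (n : ℕ) (X : Matrix (Fin 2) (Fin n) ℝ) : Matrix (Fin 2) (Fin n) ℝ :=
  Matrix.of fun i j =>
    if i = 0 then (if (j : ℕ) + 1 < n then X 0 j else 0)
    else (if (j : ℕ) + 1 = n then X 1 j else 0)

/-- A homogeneous gradient Young measure: a compactly supported Borel probability measure
satisfying Jensen's inequality for all quasiconvex functions. -/
def IsHomogeneousGradientYoungMeasure {m n : ℕ}
    (μ : Measure (Matrix (Fin m) (Fin n) ℝ)) : Prop :=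
  IsProbabilityMeasure μ ∧ (∃ K, IsCompact K ∧ μ Kᶜ = 0) ∧
  ∀ f : Matrix (Fin m) (Fin n) ℝ → ℝ, IsQuasiconvex f →
    f (matBarycenter μ) ≤ ∫ X, f X ∂μ

/-- A laminate: a compactly supported Borel probability measure
satisfying Jensen's inequality for all rank-one convex functions. -/
def IsLaminate {m n : ℕ} (μ : Measure (Matrix (Fin m) (Fin n) ℝ)) : Prop :=
  IsProbabilityMeasure μ ∧ (∃ K, IsCompact K ∧ μ Kᶜ = 0) ∧
  ∀ f : Matrix (Fin m) (Fin n) ℝ → ℝ, IsRankOneConvex f →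
    f (matBarycenter μ) ≤ ∫ X, f X ∂μ

/-- `M^{2×2}_+ = {X : X₁₂ > 0}`. -/
def Mplus : Set (Matrix (Fin 2) (Fin 2) ℝ) := {X | 0 < X 0 1}

/-- The partial Legendre transform `Ψ`. -/
def Psi (X : Matrix (Fin 2) (Fin 2) ℝ) : Matrix (Fin 2) (Fin 2) ℝ :=
  (X 0 1)⁻¹ • !![-(X 0 0), 1; -X.det, X 1 1]

/-- The dual function `h̃(X) = X₁₂ · h(Ψ(X))`. -/
def dualFn (h : Matrix (Fin 2) (Fin 2) ℝ → ℝ) (X : Matrix (Fin 2) (Fin 2) ℝ) : ℝ :=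
  X 0 1 * h (Psi X)

/-- The dual measure `μ̃`, characterised by
`∫ f dμ̃ = (1/μ̄₁₂) ∫ X₁₂ · f(Ψ(X)) dμ(X)` for all Borel `f : M → [0,∞]`. -/
def dualMeasure (μ : Measure (Matrix (Fin 2) (Fin 2) ℝ)) :
    Measure (Matrix (Fin 2) (Fin 2) ℝ) :=
  Measure.map Psi
    ((ENNReal.ofReal (matBarycenter μ 0 1))⁻¹ •
      μ.withDensity fun X => ENNReal.ofReal (X 0 1))

/-- The (topological) support of a measure. -/
def mSupport {α : Type*} [TopologicalSpace α] [MeasurableSpace α] (μ : Measure α) : Set α :=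
  {x | ∀ U : Set α, IsOpen U → x ∈ U → μ U ≠ 0}

/-- `f` is quasiconvex on the open set `U ⊆ ℝ^{2×2}`. -/
def IsQuasiconvexOn (U : Set (Matrix (Fin 2) (Fin 2) ℝ))
    (f : Matrix (Fin 2) (Fin 2) ℝ → ℝ) : Prop :=
  ∀ Ω : Set (Fin 2 → ℝ), IsOpen Ω → Ω.Nonempty → Bornology.IsBounded Ω →
    ∀ (A : Matrix (Fin 2) (Fin 2) ℝ) (φ : (Fin 2 → ℝ) → (Fin 2 → ℝ)),
      ContDiff ℝ (⊤ : ℕ∞) φ → HasCompactSupport φ → tsupport φ ⊆ Ω →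
      (∀ x, A + jacobianM 2 2 φ x ∈ U) →
      f A * (volume Ω).toReal ≤ ∫ x in Ω, f (A + jacobianM 2 2 φ x)

/-- `f` is rank-one convex on the open convex set `U ⊆ ℝ^{2×2}`. -/
def IsRankOneConvexOn (U : Set (Matrix (Fin 2) (Fin 2) ℝ))
    (f : Matrix (Fin 2) (Fin 2) ℝ → ℝ) : Prop :=
  ∀ X ∈ U, ∀ Y ∈ U, (X - Y).rank ≤ 1 →
    ∀ t : ℝ, t ∈ Set.Icc (0 : ℝ) 1 →
      f (t • X + (1 - t) • Y) ≤ t * f X + (1 - t) * f Y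

/-! Write `Ψ X = (X₁₂)⁻¹ • N X` with `N X = [[-X₁₁, 1], [-det X, X₂₂]]`. Along a rank-one segment
`det` is affine, hence so is `N`, so `Ψ` maps the segment `[A, B]` onto `[Ψ A, Ψ B]` with the
weights `t A₁₂ : (1 - t) B₁₂`; this makes `h̃ X = X₁₂ h (Ψ X)` rank-one convex whenever `h` is.
Since `∫ f dμ̃ = μ̄₁₂⁻¹ ∫ f̃ dμ` and `∫ det dμ = det μ̄` (both `±det` are rank-one convex), the
barycentre of `μ̃` is `Ψ μ̄`, and Jensen's inequality for `f` under `μ̃` becomes Jensen's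
inequality for `f̃` under `μ`. Involutivity comes from `Ψ ∘ Ψ = id` and `X₁₂ (Ψ X)₁₂ = 1` on `M₊`. -/

open scoped ENNReal

local notation "M₂" => Matrix (Fin 2) (Fin 2) ℝ

instance matrixBorelSpace {m n : ℕ} : BorelSpace (Matrix (Fin m) (Fin n) ℝ) :=
  show BorelSpace (Fin m → Fin n → ℝ) from inferInstance

namespace Matrix

theorem rank_lt_card_iff_det_eq_zero {n K : Type*} [Fintype n] [DecidableEq n] [Field K]
    (A : Matrix n n K) : A.rank < Fintype.card n ↔ A.det = 0 := by
  refine ⟨fun h => by_contra fun hdet => h.ne (rank_of_det_ne_zero hdet), fun hdet => ?_⟩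
  obtain ⟨v, hv, hAv⟩ := exists_mulVec_eq_zero_iff.2 hdet
  have hker : 0 < Module.finrank K (LinearMap.ker A.mulVecLin) :=
    Module.finrank_pos_iff_exists_ne_zero.2 ⟨⟨v, hAv⟩, fun h => hv (congrArg Subtype.val h)⟩
  have := A.mulVecLin.finrank_range_add_finrank_ker
  rw [Module.finrank_fintype_fun_eq_card] at this
  rw [rank]
  omega

theorem rank_le_one_iff_det_eq_zero {K : Type*} [Field K] (A : Matrix (Fin 2) (Fin 2) K) :
    A.rank ≤ 1 ↔ A.det = 0 := by
  rw [← rank_lt_card_iff_det_eq_zero, Fintype.card_fin, Nat.lt_succ_iff]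

theorem det_smul_add_one_sub_smul_of_det_sub_eq_zero {R : Type*} [CommRing R]
    {A B : Matrix (Fin 2) (Fin 2) R} (h : (A - B).det = 0) (t : R) :
    (t • A + (1 - t) • B).det = t * A.det + (1 - t) * B.det := by
  simp only [det_fin_two, add_apply, smul_apply, sub_apply, smul_eq_mul] at *
  linear_combination (-(t * (1 - t))) * h

end Matrix

theorem isRankOneConvexOn_det (U : Set M₂) : IsRankOneConvexOn U Matrix.det := by
  intro A _ B _ hAB t _
  rw [Matrix.det_smul_add_one_sub_smul_of_det_sub_eq_zero
    ((Matrix.rank_le_one_iff_det_eq_zero _).1 hAB)]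

theorem isRankOneConvexOn_neg_det (U : Set M₂) : IsRankOneConvexOn U fun X => -X.det := by
  intro A _ B _ hAB t _
  dsimp only
  rw [Matrix.det_smul_add_one_sub_smul_of_det_sub_eq_zero
    ((Matrix.rank_le_one_iff_det_eq_zero _).1 hAB)]
  linarith

theorem integral_det_eq_det_matBarycenter {U : Set M₂} {μ : Measure M₂}
    (hrc : ∀ f : M₂ → ℝ, IsRankOneConvexOn U f → f (matBarycenter μ) ≤ ∫ X, f X ∂μ) :
    ∫ X, X.det ∂μ = (matBarycenter μ).det := by
  have hle := hrc _ (isRankOneConvexOn_det U)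
  have hge := hrc _ (isRankOneConvexOn_neg_det U)
  rw [integral_neg] at hge
  linarith

def psiNumerator (X : M₂) : M₂ := !![-(X 0 0), 1; -X.det, X 1 1]

@[simp] theorem psiNumerator_apply_zero_zero (X : M₂) : psiNumerator X 0 0 = -X 0 0 := rfl
@[simp] theorem psiNumerator_apply_zero_one (X : M₂) : psiNumerator X 0 1 = 1 := rfl
@[simp] theorem psiNumerator_apply_one_zero (X : M₂) : psiNumerator X 1 0 = -X.det := rfl
@[simp] theorem psiNumerator_apply_one_one (X : M₂) : psiNumerator X 1 1 = X 1 1 := rfl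

theorem Psi_eq_smul_psiNumerator (X : M₂) : Psi X = (X 0 1)⁻¹ • psiNumerator X := rfl

theorem Psi_apply (X : M₂) (i j : Fin 2) : Psi X i j = (X 0 1)⁻¹ * psiNumerator X i j := rfl

@[simp]
theorem Psi_apply_zero_one (X : M₂) : Psi X 0 1 = (X 0 1)⁻¹ := by
  rw [Psi_apply, psiNumerator_apply_zero_one, mul_one]

theorem smul_Psi {X : M₂} (hX : X 0 1 ≠ 0) : X 0 1 • Psi X = psiNumerator X := by
  rw [Psi_eq_smul_psiNumerator, smul_smul, mul_inv_cancel₀ hX, one_smul]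

theorem Psi_mem_Mplus {X : M₂} (hX : X ∈ Mplus) : Psi X ∈ Mplus := by
  simpa [Mplus] using hX

theorem Psi_Psi {X : M₂} (hX : X 0 1 ≠ 0) : Psi (Psi X) = X := by
  ext i j
  fin_cases i <;> fin_cases j <;>
    simp only [Fin.zero_eta, Fin.mk_one, Fin.isValue, Psi_apply, Matrix.det_fin_two, mul_one,
      inv_inv, psiNumerator_apply_zero_zero, psiNumerator_apply_zero_one,
      psiNumerator_apply_one_zero, psiNumerator_apply_one_one]
  all_goals field_simp
  ring

theorem det_Psi_sub_Psi {A B : M₂} (hA : A 0 1 ≠ 0) (hB : B 0 1 ≠ 0) :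
    (Psi A - Psi B).det = -(A - B).det / (A 0 1 * B 0 1) := by
  simp only [Matrix.det_fin_two, Matrix.sub_apply, Psi_apply, mul_one,
    psiNumerator_apply_zero_zero, psiNumerator_apply_zero_one, psiNumerator_apply_one_zero,
    psiNumerator_apply_one_one]
  field_simp
  ring

theorem psiNumerator_smul_add_one_sub_smul {A B : M₂} (h : (A - B).det = 0) (t : ℝ) :
    psiNumerator (t • A + (1 - t) • B) = t • psiNumerator A + (1 - t) • psiNumerator B := by
  have hdet := Matrix.det_smul_add_one_sub_smul_of_det_sub_eq_zero h t
  ext i j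
  fin_cases i <;> fin_cases j <;>
    simp only [Fin.zero_eta, Fin.mk_one, Fin.isValue, Matrix.add_apply, Matrix.smul_apply,
      smul_eq_mul, hdet, psiNumerator_apply_zero_zero, psiNumerator_apply_zero_one,
      psiNumerator_apply_one_zero, psiNumerator_apply_one_one] <;>
    ring

theorem isRankOneConvexOn_dualFn {f : M₂ → ℝ} (hf : IsRankOneConvexOn Mplus f) :
    IsRankOneConvexOn Mplus (dualFn f) := by
  intro A (hA : 0 < A 0 1) B (hB : 0 < B 0 1) hAB t ⟨ht₀, ht₁⟩
  have hdet := (Matrix.rank_le_one_iff_det_eq_zero _).1 hAB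
  have hab : 0 < t * A 0 1 + (1 - t) * B 0 1 := by
    rcases ht₀.eq_or_lt with rfl | ht
    · simpa using hB
    · nlinarith [mul_pos ht hA, mul_nonneg (sub_nonneg.2 ht₁) hB.le]
  have hC : (t • A + (1 - t) • B) 0 1 = t * A 0 1 + (1 - t) * B 0 1 := by simp
  set a := t * A 0 1
  set b := (1 - t) * B 0 1
  set s := a / (a + b)
  have hs : s ∈ Set.Icc (0 : ℝ) 1 :=
    ⟨div_nonneg (by positivity) hab.le, (div_le_one hab).2 (by nlinarith)⟩
  have h1s : 1 - s = b / (a + b) := by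
    rw [eq_div_iff hab.ne', sub_mul, div_mul_cancel₀ _ hab.ne']
    ring
  have hPsi : Psi (t • A + (1 - t) • B) = s • Psi A + (1 - s) • Psi B := by
    rw [Psi_eq_smul_psiNumerator, hC, psiNumerator_smul_add_one_sub_smul hdet,
      ← smul_Psi hA.ne', ← smul_Psi hB.ne', smul_add, smul_smul, smul_smul, smul_smul,
      smul_smul, h1s]
    congr 2 <;> ring
  have hrank : (Psi A - Psi B).rank ≤ 1 := by
    rw [Matrix.rank_le_one_iff_det_eq_zero, det_Psi_sub_Psi hA.ne' hB.ne', hdet]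
    simp
  calc dualFn f (t • A + (1 - t) • B) = (a + b) * f (s • Psi A + (1 - s) • Psi B) := by
        rw [dualFn, hC, hPsi]
    _ ≤ (a + b) * (s * f (Psi A) + (1 - s) * f (Psi B)) :=
        mul_le_mul_of_nonneg_left (hf _ (Psi_mem_Mplus hA) _ (Psi_mem_Mplus hB) hrank s hs)
          hab.le
    _ = t * dualFn f A + (1 - t) * dualFn f B := by
        rw [h1s, mul_add, ← mul_assoc, ← mul_assoc, mul_div_cancel₀ _ hab.ne',
          mul_div_cancel₀ _ hab.ne', dualFn, dualFn]
        ring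

theorem continuous_psiNumerator : Continuous psiNumerator := by
  refine continuous_pi fun i => continuous_pi fun j => ?_
  fin_cases i <;> fin_cases j <;>
    simp only [Fin.zero_eta, Fin.mk_one, Fin.isValue, psiNumerator_apply_zero_zero,
      psiNumerator_apply_zero_one, psiNumerator_apply_one_zero, psiNumerator_apply_one_one] <;>
    fun_prop

theorem continuousOn_Psi : ContinuousOn Psi Mplus :=
  ((continuous_apply_apply 0 1).continuousOn.inv₀ fun _ hX => ne_of_gt hX).smul
    continuous_psiNumerator.continuousOn

theorem measurable_Psi : Measurable Psi :=
  (continuous_apply_apply 0 1).measurable.inv.smul continuous_psiNumerator.measurable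

/-- `Ψ` extended by the identity to `{X₁₂ = 0}`: an involution of all of `ℝ^{2×2}`, hence a
measurable equivalence, so that change of variables applies to non-measurable integrands. -/
def psiExt (X : M₂) : M₂ := if X 0 1 = 0 then X else Psi X

theorem psiExt_of_ne_zero {X : M₂} (hX : X 0 1 ≠ 0) : psiExt X = Psi X := if_neg hX

theorem psiExt_involutive : Function.Involutive psiExt := by
  intro X
  by_cases hX : X 0 1 = 0
  · simp [psiExt, hX]
  · rw [psiExt_of_ne_zero hX, psiExt_of_ne_zero (by simpa using hX), Psi_Psi hX]

theorem measurable_psiExt : Measurable psiExt :=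
  Measurable.ite (measurableSet_eq_fun (continuous_apply_apply 0 1).measurable measurable_const)
    measurable_id measurable_Psi

def psiEquiv : M₂ ≃ᵐ M₂ where
  toEquiv := psiExt_involutive.toPerm
  measurable_toFun := measurable_psiExt
  measurable_invFun := measurable_psiExt

@[simp]
theorem coe_psiEquiv : ⇑psiEquiv = psiExt := rfl

theorem Continuous.integrable_of_ae_mem_isCompact {α E : Type*} [TopologicalSpace α]
    [T2Space α] [MeasurableSpace α] [OpensMeasurableSpace α] [NormedAddCommGroup E]
    {μ : Measure α} [IsFiniteMeasure μ] {g : α → E} (hg : Continuous g) {K : Set α}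
    (hK : IsCompact K) (hμK : ∀ᵐ x ∂μ, x ∈ K) : Integrable g μ := by
  have hgK := hg.continuousOn.integrableOn_compact (μ := μ) hK
  rwa [IntegrableOn, Measure.restrict_eq_self_of_ae_mem hμK] at hgK

theorem matBarycenter_apply {m n : ℕ} (μ : Measure (Matrix (Fin m) (Fin n) ℝ)) (i : Fin m)
    (j : Fin n) : matBarycenter μ i j = ∫ X, X i j ∂μ := rfl

def preDualMeasure (μ : Measure M₂) : Measure M₂ :=
  (ENNReal.ofReal (matBarycenter μ 0 1))⁻¹ • μ.withDensity fun X => ENNReal.ofReal (X 0 1)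

theorem measurable_ofReal_apply_zero_one : Measurable fun X : M₂ => ENNReal.ofReal (X 0 1) :=
  ENNReal.measurable_ofReal.comp (continuous_apply_apply 0 1).measurable

theorem preDualMeasure_absolutelyContinuous (μ : Measure M₂) : preDualMeasure μ ≪ μ :=
  (withDensity_absolutelyContinuous _ _).smul_left _

theorem ae_preDualMeasure_ne_zero (μ : Measure M₂) : ∀ᵐ X ∂preDualMeasure μ, X 0 1 ≠ 0 :=
  Measure.smul_absolutelyContinuous.ae_le <|
    (ae_withDensity_iff measurable_ofReal_apply_zero_one).2 <|
      ae_of_all _ fun X hρ h0 => hρ (by simp [h0])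

theorem dualMeasure_eq_map_psiEquiv (μ : Measure M₂) :
    dualMeasure μ = (preDualMeasure μ).map psiEquiv :=
  Measure.map_congr <| (ae_preDualMeasure_ne_zero μ).mono fun _ hX => (psiExt_of_ne_zero hX).symm

theorem lintegral_dualMeasure (μ : Measure M₂) {g : M₂ → ℝ≥0∞} (hg : Measurable g) :
    ∫⁻ Y, g Y ∂dualMeasure μ =
      (ENNReal.ofReal (matBarycenter μ 0 1))⁻¹ *
        ∫⁻ X, ENNReal.ofReal (X 0 1) * g (Psi X) ∂μ := by
  rw [dualMeasure_eq_map_psiEquiv, lintegral_map_equiv, coe_psiEquiv, preDualMeasure,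
    lintegral_smul_measure, smul_eq_mul,
    lintegral_withDensity_eq_lintegral_mul _ measurable_ofReal_apply_zero_one
      (g := fun X => g (psiExt X)) (hg.comp measurable_psiExt)]
  congr 1
  refine lintegral_congr fun X => ?_
  by_cases hX : X 0 1 = 0
  · simp [hX]
  · simp [psiExt_of_ne_zero hX]

section DualMeasure

variable {μ : Measure M₂}

theorem integral_dualMeasure (hμ : ∀ᵐ X ∂μ, 0 ≤ X 0 1) (f : M₂ → ℝ) :
    ∫ Y, f Y ∂dualMeasure μ = (matBarycenter μ 0 1)⁻¹ * ∫ X, dualFn f X ∂μ := by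
  have hc : 0 ≤ matBarycenter μ 0 1 := integral_nonneg_of_ae hμ
  rw [dualMeasure_eq_map_psiEquiv, integral_map_equiv, coe_psiEquiv, preDualMeasure,
    integral_smul_measure, ENNReal.toReal_inv, ENNReal.toReal_ofReal hc, smul_eq_mul]
  rw [show (fun X : M₂ => ENNReal.ofReal (X 0 1)) = fun X => ((X 0 1).toNNReal : ℝ≥0∞) from rfl,
    integral_withDensity_eq_integral_smul (continuous_apply_apply 0 1).measurable.real_toNNReal]
  congr 1
  refine integral_congr_ae (hμ.mono fun X hX => ?_)
  by_cases h0 : X 0 1 = 0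
  · simp [dualFn, h0]
  · simp [dualFn, psiExt_of_ne_zero h0, NNReal.smul_def, Real.coe_toNNReal _ hX]

theorem ae_dualMeasure_mem_image {S : Set M₂} (hS : ∀ᵐ X ∂μ, X ∈ S) :
    ∀ᵐ Y ∂dualMeasure μ, Y ∈ Psi '' S := by
  rw [dualMeasure_eq_map_psiEquiv, psiEquiv.measurableEmbedding.ae_map_iff]
  filter_upwards [ae_preDualMeasure_ne_zero μ, (preDualMeasure_absolutelyContinuous μ).ae_le hS]
    with X h0 hX
  exact ⟨X, hX, (psiExt_of_ne_zero h0).symm⟩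

theorem matBarycenter_zero_one_pos [IsProbabilityMeasure μ] {K : Set M₂} (hK : IsCompact K)
    (hKM : K ⊆ Mplus) (hμK : ∀ᵐ X ∂μ, X ∈ K) : 0 < matBarycenter μ 0 1 := by
  have hμ : ∀ᵐ X ∂μ, 0 < X 0 1 := hμK.mono fun X hX => hKM hX
  rw [matBarycenter_apply, integral_pos_iff_support_of_nonneg_ae (hμ.mono fun _ h => h.le)
    ((continuous_apply_apply 0 1).integrable_of_ae_mem_isCompact hK hμK), pos_iff_ne_zero]
  intro h0
  have hfalse : ∀ᵐ _ ∂μ, False := by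
    filter_upwards [measure_eq_zero_iff_ae_notMem.1 h0, hμ] with X hX hpos
    exact hX hpos.ne'
  exact IsProbabilityMeasure.ne_zero μ (by simpa using hfalse)

theorem matBarycenter_dualMeasure_apply (hμ : ∀ᵐ X ∂μ, 0 < X 0 1) (i j : Fin 2) :
    matBarycenter (dualMeasure μ) i j =
      (matBarycenter μ 0 1)⁻¹ * ∫ X, psiNumerator X i j ∂μ := by
  rw [matBarycenter_apply, integral_dualMeasure (hμ.mono fun _ h => h.le)]
  congr 1
  refine integral_congr_ae (hμ.mono fun X hX => ?_)
  simp only [dualFn, ← smul_Psi hX.ne', Matrix.smul_apply, smul_eq_mul]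

theorem matBarycenter_dualMeasure_zero_one [IsProbabilityMeasure μ] (hμ : ∀ᵐ X ∂μ, 0 < X 0 1) :
    matBarycenter (dualMeasure μ) 0 1 = (matBarycenter μ 0 1)⁻¹ := by
  simp [matBarycenter_dualMeasure_apply hμ]

theorem matBarycenter_dualMeasure [IsProbabilityMeasure μ] (hμ : ∀ᵐ X ∂μ, 0 < X 0 1)
    (hdet : ∫ X, X.det ∂μ = (matBarycenter μ).det) :
    matBarycenter (dualMeasure μ) = Psi (matBarycenter μ) := by
  ext i j
  rw [matBarycenter_dualMeasure_apply hμ, Psi_eq_smul_psiNumerator, Matrix.smul_apply,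
    smul_eq_mul]
  fin_cases i <;> fin_cases j <;> simp [integral_neg, hdet, matBarycenter_apply]

theorem isProbabilityMeasure_dualMeasure (hμ : ∀ᵐ X ∂μ, 0 ≤ X 0 1)
    (hc : matBarycenter μ 0 1 ≠ 0) : IsProbabilityMeasure (dualMeasure μ) := by
  constructor
  have h := integral_dualMeasure hμ fun _ => 1
  simp only [dualFn, mul_one, integral_const, smul_eq_mul] at h
  rw [← matBarycenter_apply, inv_mul_cancel₀ hc] at h
  exact (ENNReal.toReal_eq_one_iff _).1 h

theorem apply_matBarycenter_dualMeasure_le_integral [IsProbabilityMeasure μ]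
    (hμ : ∀ᵐ X ∂μ, 0 < X 0 1) (hc : 0 < matBarycenter μ 0 1)
    (hdet : ∫ X, X.det ∂μ = (matBarycenter μ).det) {f : M₂ → ℝ}
    (hf : dualFn f (matBarycenter μ) ≤ ∫ X, dualFn f X ∂μ) :
    f (matBarycenter (dualMeasure μ)) ≤ ∫ Y, f Y ∂dualMeasure μ := by
  rw [matBarycenter_dualMeasure hμ hdet, integral_dualMeasure (hμ.mono fun _ h => h.le)]
  calc f (Psi (matBarycenter μ)) = (matBarycenter μ 0 1)⁻¹ * dualFn f (matBarycenter μ) := by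
        rw [dualFn, inv_mul_cancel_left₀ hc.ne']
    _ ≤ (matBarycenter μ 0 1)⁻¹ * ∫ X, dualFn f X ∂μ := by gcongr

theorem dualMeasure_dualMeasure [IsProbabilityMeasure μ] (hμ : ∀ᵐ X ∂μ, 0 < X 0 1)
    (hc : 0 < matBarycenter μ 0 1) : dualMeasure (dualMeasure μ) = μ := by
  ext s hs
  have hind : Measurable (s.indicator 1 : M₂ → ℝ≥0∞) := measurable_one.indicator hs
  rw [← lintegral_indicator_one hs, lintegral_dualMeasure _ hind,
    lintegral_dualMeasure (g := fun Y => ENNReal.ofReal (Y 0 1) * s.indicator 1 (Psi Y)) _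
      (measurable_ofReal_apply_zero_one.mul (hind.comp measurable_Psi)),
    matBarycenter_dualMeasure_zero_one hμ, ← mul_assoc, ENNReal.ofReal_inv_of_pos hc, inv_inv,
    ENNReal.mul_inv_cancel (by simpa using hc) ENNReal.ofReal_ne_top, one_mul,
    ← lintegral_indicator_one hs]
  refine lintegral_congr_ae (hμ.mono fun X hX => ?_)
  simp [Psi_Psi hX.ne', ← mul_assoc, ← ENNReal.ofReal_mul hX.le, mul_inv_cancel₀ hX.ne']

end DualMeasure

/-- The map `μ ↦ μ̃` maps the laminates with compact support in `M^{2×2}_+` bijectively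
onto themselves, and is an involution on this set. -/
theorem dualMeasure_laminate
    (μ : Measure (Matrix (Fin 2) (Fin 2) ℝ))
    (hprob : IsProbabilityMeasure μ)
    (hsupp : ∃ K : Set (Matrix (Fin 2) (Fin 2) ℝ), IsCompact K ∧ K ⊆ Mplus ∧ μ Kᶜ = 0)
    (hrc : ∀ f : Matrix (Fin 2) (Fin 2) ℝ → ℝ, IsRankOneConvexOn Mplus f →
      f (matBarycenter μ) ≤ ∫ X, f X ∂μ) :
    IsProbabilityMeasure (dualMeasure μ) ∧
    (∃ K : Set (Matrix (Fin 2) (Fin 2) ℝ), IsCompact K ∧ K ⊆ Mplus ∧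
      (dualMeasure μ) Kᶜ = 0) ∧
    (∀ f : Matrix (Fin 2) (Fin 2) ℝ → ℝ, IsRankOneConvexOn Mplus f →
      f (matBarycenter (dualMeasure μ)) ≤ ∫ X, f X ∂(dualMeasure μ)) ∧
    dualMeasure (dualMeasure μ) = μ := by
  obtain ⟨K, hK, hKM, hμK⟩ := hsupp
  have hK_ae : ∀ᵐ X ∂μ, X ∈ K := mem_ae_iff.2 hμK
  have hμ : ∀ᵐ X ∂μ, 0 < X 0 1 := hK_ae.mono fun X hX => hKM hX
  have hc := matBarycenter_zero_one_pos hK hKM hK_ae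
  have hdet := integral_det_eq_det_matBarycenter hrc
  refine ⟨isProbabilityMeasure_dualMeasure (hμ.mono fun _ h => h.le) hc.ne', ?_, ?_,
    dualMeasure_dualMeasure hμ hc⟩
  · exact ⟨Psi '' K, hK.image_of_continuousOn (continuousOn_Psi.mono hKM),
      Set.image_subset_iff.2 fun X hX => Psi_mem_Mplus (hKM hX),
      mem_ae_iff.1 (ae_dualMeasure_mem_image hK_ae)⟩
  · exact fun f hf =>
      apply_matBarycenter_dualMeasure_le_integral hμ hc hdet (hrc _ (isRankOneConvexOn_dualFn hf))

end
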